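/- 1 - δ, where δ = 1 - log₂ e + log₂ log₂ e, is the greatest real constant c such that for every integer n ≥ 1, n·⌈log₂ n⌉ - 2^⌈log₂ n⌉ + 1 < n·log₂ n - c·n + 1. -/

import Mathlib

noncomputable def delta : ℝ :=
  1 - Real.logb 2 (Real.exp 1) + Real.logb 2 (Real.logb 2 (Real.exp 1))

/-!
With `k = ⌈log₂ n⌉`, the inequality for `n` is equivalent to `c < g (2^k / n)`, where
`g t = t - log₂ t`. The function `g` attains its minimum `1 - δ` only at `t = 1 / ln 2`.
Since `ln 2` is irrational, `2^k / n` never equals `1 / ln 2`, so `c = 1 - δ` works; and along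
`n = ⌈2^K ln 2⌉` we have `⌈log₂ n⌉ = K` and `2^K / n → 1 / ln 2`, so no larger `c` does.
-/

open Real Filter Topology Polynomial
open scoped Nat

theorem eventually_pow_div_factorial_pred_lt_one (c : ℝ) :
    ∀ᶠ p : ℕ in atTop, c ^ p / (p - 1)! < 1 := by
  have h : Tendsto (fun j : ℕ => c * (c ^ j / j !)) atTop (𝓝 0) := by
    simpa using (FloorSemiring.tendsto_pow_div_factorial_atTop c).const_mul c
  have h' : Tendsto (fun p : ℕ => c ^ p / (p - 1)!) atTop (𝓝 0) := by
    rw [← tendsto_add_atTop_iff_nat 1]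
    refine h.congr fun j => ?_
    rw [Nat.add_sub_cancel, pow_succ]
    ring
  exact h'.eventually (gt_mem_nhds one_pos)

/- Hermite's argument: for a large prime `p`, the approximation `n e^m ≈ p g(m)` turns into an
integer of absolute value `< 1` that is not divisible by `p`. -/
theorem exp_intCast_ne_intCast {m : ℤ} (hm : m ≠ 0) (N : ℤ) : exp m ≠ N := by
  intro hN
  obtain ⟨c, hc⟩ := LindemannWeierstrass.exp_polynomial_approx (X - C m) (by simpa using hm)
  obtain ⟨J, hJ⟩ := eventually_atTop.mp (eventually_pow_div_factorial_pred_lt_one c)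
  obtain ⟨p, hp_ge, hp⟩ := Nat.exists_infinite_primes (J + m.natAbs + N.natAbs + 1)
  obtain ⟨n, hpn, g, -, hg⟩ := hc p (by simp; omega) hp
  have hz : ‖((n * N - p * g.eval m : ℤ) : ℂ)‖ < 1 := by
    have hbound := hg (r := m) (by rw [aroots_X_sub_C]; simp)
    have e1 : Complex.exp (m : ℂ) = (N : ℂ) := by
      rw [← Complex.ofReal_intCast, ← Complex.ofReal_exp, hN, Complex.ofReal_intCast]
    have e2 : aeval (m : ℂ) g = ((g.eval m : ℤ) : ℂ) := by
      simpa using aeval_algebraMap_apply_eq_algebraMap_eval (A := ℂ) m g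
    rw [e1, e2, zsmul_eq_mul, nsmul_eq_mul] at hbound
    push_cast
    exact hbound.trans_lt (hJ p (by omega))
  have hz0 : n * N - p * g.eval m = 0 := by
    rw [Complex.norm_intCast] at hz
    exact Int.abs_lt_one_iff.mp (by exact_mod_cast hz)
  have hpN : (p : ℤ) ∣ n * N := ⟨g.eval m, by linarith⟩
  rcases (Nat.prime_iff_prime_int.mp hp).dvd_or_dvd hpN with h | h
  · exact hpn h
  · have hN0 : N ≠ 0 := by
      rintro rfl
      exact (exp_pos (m : ℝ)).ne' (by exact_mod_cast hN)
    have hpN_le := Nat.le_of_dvd (Int.natAbs_pos.mpr hN0) (Int.natCast_dvd.mp h)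
    omega

theorem irrational_log_natCast {n : ℕ} (hn : 2 ≤ n) : Irrational (log n) := by
  rintro ⟨q, hq⟩
  have hnum : q.num ≠ 0 := by
    rw [Rat.num_ne_zero]
    rintro rfl
    exact (log_pos (by exact_mod_cast hn : (1 : ℝ) < n)).ne (by simpa using hq)
  have hq' : (q.num : ℝ) = q.den * log n := by
    rw [← hq, mul_comm]; exact_mod_cast (Rat.mul_den_eq_num q).symm
  refine exp_intCast_ne_intCast hnum ((n : ℤ) ^ q.den) ?_
  rw [hq', exp_nat_mul, exp_log (by positivity)]
  push_cast; rfl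

theorem inv_log_sub_logb_inv_log_lt {b t : ℝ} (hb : 1 < b) (ht : 0 < t) (hne : t ≠ (log b)⁻¹) :
    (log b)⁻¹ - logb b (log b)⁻¹ < t - logb b t := by
  have hL : 0 < log b := log_pos hb
  have key : log (t * log b) < t * log b - 1 :=
    log_lt_sub_one_of_pos (by positivity) fun h => hne (eq_inv_of_mul_eq_one_left h)
  rw [log_mul ht.ne' hL.ne'] at key
  have h := div_lt_div_of_pos_right key hL
  rw [add_div, sub_div, mul_div_cancel_right₀ _ hL.ne', one_div] at h
  simp only [logb, log_inv, neg_div]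
  linarith

theorem one_sub_delta_eq : 1 - delta = (log 2)⁻¹ - logb 2 (log 2)⁻¹ := by
  simp only [delta, logb, log_exp, log_inv, one_div]
  ring

theorem mul_sub_two_pow_add_one_lt_iff {x c : ℝ} (hx : 0 < x) (k : ℕ) :
    x * k - 2 ^ k + 1 < x * logb 2 x - c * x + 1 ↔ c < 2 ^ k / x - logb 2 (2 ^ k / x) := by
  rw [logb_div (by positivity) hx.ne', logb_pow, logb_self_eq_one one_lt_two, mul_one,
    ← sub_add, sub_add_eq_add_sub, div_sub' hx.ne', div_add' _ _ _ hx.ne', lt_div_iff₀ hx]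
  constructor <;> intro h <;> linarith

theorem clog_two_ceil_two_pow_mul {a : ℝ} (ha : 1 / 2 < a) (ha' : a ≤ 1) (K : ℕ) :
    Nat.clog 2 ⌈2 ^ K * a⌉₊ = K := by
  refine le_antisymm ((Nat.clog_le_iff_le_pow one_lt_two).mpr ?_) ?_
  · exact Nat.ceil_le.mpr (by push_cast; nlinarith [pow_pos (two_pos : (0 : ℝ) < 2) K])
  · rcases K with _ | j
    · exact Nat.zero_le _
    · refine (Nat.lt_clog_iff_pow_lt one_lt_two).mpr (Nat.lt_ceil.mpr ?_)
      push_cast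
      nlinarith [pow_pos (two_pos : (0 : ℝ) < 2) j, pow_succ (2 : ℝ) j]

theorem Filter.Tendsto.div_ceil_mul {ι : Type*} {l : Filter ι} {f : ι → ℝ} {a : ℝ} (ha : 0 < a)
    (hf : Tendsto f l atTop) : Tendsto (fun i => f i / ⌈f i * a⌉₊) l (𝓝 a⁻¹) := by
  have hfa : Tendsto (fun i => f i * a) l atTop := hf.atTop_mul_const ha
  have h := ((tendsto_nat_ceil_div_atTop.comp hfa).inv₀ one_ne_zero).const_mul a⁻¹
  rw [inv_one, mul_one] at h
  refine h.congr' ?_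
  filter_upwards [hfa.eventually_gt_atTop 0] with i hi
  simp only [Function.comp_apply, inv_div]
  field_simp

theorem greatest_constant :
    IsGreatest
      {c : ℝ | ∀ n : ℕ, 1 ≤ n →
        (n : ℝ) * Nat.clog 2 n - 2 ^ Nat.clog 2 n + 1
          < (n : ℝ) * Real.logb 2 n - c * n + 1}
      (1 - delta) := by
  have hL : 0 < log 2 := log_pos one_lt_two
  rw [one_sub_delta_eq]
  refine ⟨fun n hn => ?_, fun c hc => ?_⟩
  · rw [mul_sub_two_pow_add_one_lt_iff (by positivity)]
    refine inv_log_sub_logb_inv_log_lt one_lt_two (by positivity) fun h => ?_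
    refine irrational_log_natCast (le_refl 2) ⟨n / 2 ^ Nat.clog 2 n, ?_⟩
    rw [Nat.cast_ofNat, ← inv_inv (log 2), ← h]
    push_cast
    rw [inv_div]
  · have hg : ContinuousAt (fun t => t - logb 2 t) (log 2)⁻¹ :=
      continuousAt_id.sub (continuousAt_logb (inv_ne_zero hL.ne'))
    have hlim := hg.tendsto.comp
      ((tendsto_pow_atTop_atTop_of_one_lt (one_lt_two : (1 : ℝ) < 2)).div_ceil_mul hL)
    refine ge_of_tendsto' hlim fun K => ?_
    have hK := hc ⌈2 ^ K * log 2⌉₊ (Nat.one_le_ceil_iff.mpr (by positivity))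
    rw [clog_two_ceil_two_pow_mul (by linarith [log_two_gt_d9]) (by linarith [log_two_lt_d9]),
      mul_sub_two_pow_add_one_lt_iff (by positivity)] at hK
    exact hK.le
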